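/- arXiv:math/0609456 — 2 statements merged into one kernel-verified Lean document; each statement's English description precedes it below -/
import Mathlib

section
/- Let Λ = ℂ[ℤ^m] with m ≥ 1, and let A be a Λ-module which is finite-dimensional over ℂ. Then for each j ≥ 0, the set A_j = { ρ ∈ Hom(ℤ^m, ℂ*) : Tor_j^Λ(ℂ_ρ, A) = 0 } is a nonempty Zariski open subset of the character torus (ℂ*)^m. -/
open CategoryTheory

/-- The complex group algebra of `G`. -/
abbrev GA (G : Type) [Group G] : Type := MonoidAlgebra ℂ G

/-- The ring homomorphism `ℂ[G] → ℂ` induced by a character `ρ : G → ℂ*`. -/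
noncomputable def evalChar (G : Type) [Group G] (ρ : G →* ℂˣ) : GA G →+* ℂ :=
  ((MonoidAlgebra.lift (R := ℂ) (M := G) (A := ℂ)) ((Units.coeHom ℂ).comp ρ)).toRingHom

/-- `ℂ` as a `ℂ[G]`-module via the character `ρ` (the rank one local system `ℂ_ρ`). -/
noncomputable def CRho (G : Type) [Group G] (ρ : G →* ℂˣ) : ModuleCat (GA G) :=
  @ModuleCat.of (GA G) _ ℂ _ (Module.compHom ℂ (evalChar G ρ))

/-- The augmentation submodule of a `ℂ[G]`-module `M`, generated by all `g•m - m`. -/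
noncomputable def augSub (G : Type) [Group G] (M : ModuleCat (GA G)) : Submodule (GA G) M :=
  Submodule.span (GA G) {x | ∃ (g : G) (m : M), x = (MonoidAlgebra.of ℂ G g) • m - m}

/-- The coinvariants functor `M ↦ M_G` on `ℂ[G]`-modules. -/
noncomputable def coinvFunctor (G : Type) [Group G] :
    ModuleCat (GA G) ⥤ ModuleCat (GA G) where
  obj M := ModuleCat.of _ (M ⧸ augSub G M)
  map {M N} f := ModuleCat.ofHom (Submodule.mapQ (augSub G M) (augSub G N) f.hom (by
    rw [augSub, Submodule.span_le]
    rintro x ⟨g, m, rfl⟩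
    exact Submodule.subset_span ⟨g, f m, by simp⟩))
  map_id M := by
    apply ModuleCat.hom_ext
    apply Submodule.linearMap_qext
    rfl
  map_comp f g := by
    apply ModuleCat.hom_ext
    apply Submodule.linearMap_qext
    rfl

instance (G : Type) [Group G] : (coinvFunctor G).Additive where
  map_add := by
    intros
    apply ModuleCat.hom_ext
    apply Submodule.linearMap_qext
    rfl

/-- Group homology `H_n(G, ℂ_ρ)` with coefficients in the rank one local system `ℂ_ρ`,
defined as the `n`-th left derived functor of the coinvariants functor.  For `ρ = 1`
this is group homology with (trivial) complex coefficients `H_n(G, ℂ)`. -/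
noncomputable def grpHomology (G : Type) [Group G] (n : ℕ) (ρ : G →* ℂˣ) :
    ModuleCat (GA G) :=
  (((coinvFunctor G).leftDerived n).obj (CRho G ρ))

/-- The free abelian group `ℤ^m`, written multiplicatively. -/
abbrev Zm (m : ℕ) : Type := Multiplicative (Fin m → ℤ)

/-- The Laurent polynomial ring `Λ = ℂ[ℤ^m]` in `m` variables. -/
abbrev Laurent (m : ℕ) : Type := MonoidAlgebra ℂ (Zm m)

/-- A subset `U` of the character torus `Hom(ℤ^m, ℂ*) = (ℂ*)^m` is Zariski open if it is
the set of characters where at least one member of some family of Laurent polynomials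
does not vanish (i.e. its complement is a common zero locus). -/
def IsZariskiOpen (m : ℕ) (U : Set (Zm m →* ℂˣ)) : Prop :=
  ∃ S : Set (Laurent m), U = {ρ | ∃ f ∈ S, evalChar (Zm m) ρ f ≠ 0}

/-!
If `f ∈ Λ` annihilates `A` while `ρ(f) ≠ 0`, then multiplication by `f` on `Tor_j(ℂ_ρ, A)` is
induced both by an automorphism of `ℂ_ρ` and by the zero endomorphism of `A`, so this `Tor`
vanishes. Hence `Tor_j(ℂ_ρ, A) ≠ 0` forces `ρ` to kill the annihilator of `A`. As `A` is finite
dimensional, every generator `t` of `ℤ^m` satisfies on `A` a nonzero polynomial `p`, and `ρ(t)` is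
then a root of `p`: only finitely many characters are bad. The complement of a finite set of
points of the torus is Zariski open, and it is nonempty because the torus is infinite for `m ≥ 1`.
-/

open Polynomial MonoidalCategory

lemma CategoryTheory.Functor.leftDerived_map_zero {C D : Type*} [Category C] [Category D]
    [Abelian C] [HasProjectiveResolutions C] [Abelian D] (F : C ⥤ D) [F.Additive] (n : ℕ)
    (X Y : C) : (F.leftDerived n).map (0 : X ⟶ Y) = 0 := by
  obtain ⟨P⟩ : Nonempty (ProjectiveResolution X) := HasProjectiveResolution.out
  obtain ⟨Q⟩ : Nonempty (ProjectiveResolution Y) := HasProjectiveResolution.out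
  rw [F.leftDerived_map_eq n 0 (0 : P.complex ⟶ Q.complex) (by simp)]
  simp only [Functor.map_zero, Limits.zero_comp, Limits.comp_zero]

section Tor

variable {R : Type*} [CommRing R]

lemma Tor_map_smul_id_app (r : R) (X Y : ModuleCat R) (n : ℕ) :
    ((Tor (ModuleCat R) n).map (r • 𝟙 X)).app Y =
      ((Tor (ModuleCat R) n).obj X).map (r • 𝟙 Y) := by
  obtain ⟨P⟩ : Nonempty (ProjectiveResolution Y) := HasProjectiveResolution.out
  have hlift : (r • 𝟙 P.complex) ≫ P.π = P.π ≫ (ChainComplex.single₀ _).map (r • 𝟙 Y) := by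
    refine HomologicalComplex.hom_ext _ _ fun i => ?_
    rcases i with _ | i
    · simp only [HomologicalComplex.comp_f, HomologicalComplex.smul_f_apply,
        HomologicalComplex.id_f, ChainComplex.single₀_map_f_zero]
      ext x
      exact map_smul (P.π.f 0).hom r x
    · exact (HomologicalComplex.isZero_single_obj_X _ 0 Y (i + 1) (by simp)).eq_of_tgt _ _
  -- `(r • 𝟙 X) ▷ P_i` and `X ◁ (r • 𝟙 P_i)` are both multiplication by `r` on `X ⊗ P_i`.
  have hwhisker :
      (NatTrans.mapHomologicalComplex ((tensoringLeft _).map (r • 𝟙 X)) _).app P.complex =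
        (((tensoringLeft _).obj X).mapHomologicalComplex _).map (r • 𝟙 P.complex) := by
    ext1 i
    simp only [NatTrans.mapHomologicalComplex_app_f, curriedTensor_map_app,
      MonoidalLinear.smul_whiskerRight, id_whiskerRight, Functor.map_smul,
      CategoryTheory.Functor.map_id, HomologicalComplex.smul_f_apply, HomologicalComplex.id_f]
    rfl
  rw [Tor_map, ProjectiveResolution.leftDerived_app_eq _ P, hwhisker]
  exact (Functor.leftDerived_map_eq _ n _ _ hlift).symm

lemma subsingleton_Tor_of_isIso_smul_of_mem_annihilator {X Y : ModuleCat R} (r : R)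
    (hX : IsIso (r • 𝟙 X)) (hY : r ∈ Module.annihilator R Y) (n : ℕ) :
    Subsingleton (((Tor (ModuleCat R) n).obj X).obj Y) := by
  have hzero : r • 𝟙 Y = 0 := by
    ext y
    exact Module.mem_annihilator.mp hY y
  have hiso : IsIso (((Tor (ModuleCat R) n).map (r • 𝟙 X)).app Y) := inferInstance
  rw [Tor_map_smul_id_app, hzero, Tor_obj, Functor.leftDerived_map_zero] at hiso
  exact ModuleCat.isZero_iff_subsingleton.mp
    ((Limits.isIsoZero_iff_source_target_isZero _ _).mp hiso).1

end Tor

lemma exists_aeval_mem_annihilator {K R M : Type*} [Field K] [Ring R] [Algebra K R]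
    [AddCommGroup M] [Module R M] [Module K M] [IsScalarTower K R M] [Module.Finite K M] (x : R) :
    ∃ p : K[X], p ≠ 0 ∧ aeval x p ∈ Module.annihilator R M := by
  let T : Module.End K M := Algebra.lsmul K K M x
  refine ⟨minpoly K T, minpoly.ne_zero (Algebra.IsIntegral.isIntegral T),
    Module.mem_annihilator.mpr fun a => ?_⟩
  have h : Algebra.lsmul K K M (aeval x (minpoly K T)) = 0 := by
    rw [← aeval_algHom_apply, minpoly.aeval]
  exact LinearMap.congr_fun h a

section Characters

variable {G : Type} [Group G]

lemma evalChar_of (ρ : G →* ℂˣ) (g : G) : evalChar G ρ (MonoidAlgebra.of ℂ G g) = ρ g := by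
  simp [evalChar]

lemma evalChar_algebraMap (ρ : G →* ℂˣ) (c : ℂ) :
    evalChar G ρ (algebraMap ℂ (GA G) c) = c := by
  simp [evalChar]

lemma evalChar_aeval (ρ : G →* ℂˣ) (x : GA G) (p : ℂ[X]) :
    evalChar G ρ (aeval x p) = aeval (evalChar G ρ x) p :=
  (aeval_algHom_apply
    (MonoidAlgebra.lift (R := ℂ) (M := G) (A := ℂ) ((Units.coeHom ℂ).comp ρ)) x p).symm

lemma isIso_smul_id_CRho {G : Type} [CommGroup G] (ρ : G →* ℂˣ) {f : GA G}
    (hf : evalChar G ρ f ≠ 0) : IsIso (f • 𝟙 (CRho G ρ)) := by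
  rw [ConcreteCategory.isIso_iff_bijective]
  exact mulLeft_bijective₀ _ hf

lemma finite_setOf_annihilator_le_ker_evalChar [Group.FG G] (M : Type) [AddCommGroup M]
    [Module (GA G) M] (hfin : Module.Finite ℂ (RestrictScalars ℂ (GA G) M)) :
    {ρ : G →* ℂˣ | Module.annihilator (GA G) M ≤ RingHom.ker (evalChar G ρ)}.Finite := by
  let : Module ℂ M := RestrictScalars.module ℂ (GA G) M
  have : IsScalarTower ℂ (GA G) M := RestrictScalars.isScalarTower ℂ (GA G) M
  have : Module.Finite ℂ M := hfin
  obtain ⟨S, hS, hSfin⟩ := Group.fg_iff.mp ‹Group.FG G›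
  have := hSfin.to_subtype
  choose p hp0 hpann using fun g : G =>
    exists_aeval_mem_annihilator (K := ℂ) (M := M) (MonoidAlgebra.of ℂ G g)
  refine Set.Finite.of_finite_image (f := fun ρ (g : S) => (ρ g : ℂ)) ?_ fun ρ _ σ _ h =>
    MonoidHom.eq_of_eqOn_dense hS fun g hg => Units.ext (congrFun h ⟨g, hg⟩)
  refine (Set.Finite.pi fun g : S => (p g).rootSet_finite ℂ).subset ?_
  rintro _ ⟨ρ, hρ, rfl⟩ g -
  rw [mem_rootSet]
  dsimp only
  rw [← evalChar_of, ← evalChar_aeval]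
  exact ⟨hp0 g, hρ (hpann g)⟩

end Characters

section Zariski

variable {m : ℕ}

lemma isZariskiOpen_univ : IsZariskiOpen m Set.univ :=
  ⟨{1}, by simp⟩

lemma isZariskiOpen_compl_singleton (σ : Zm m →* ℂˣ) : IsZariskiOpen m {σ}ᶜ := by
  refine ⟨Set.range fun g => MonoidAlgebra.of ℂ (Zm m) g - algebraMap ℂ (Laurent m) (σ g), ?_⟩
  ext ρ
  simp only [Set.mem_compl_iff, Set.mem_singleton_iff, Set.mem_ofPred_eq,
    Set.exists_range_iff, map_sub, evalChar_of, evalChar_algebraMap, sub_ne_zero, ne_eq,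
    ← not_forall, ← Units.ext_iff, ← MonoidHom.ext_iff]

lemma IsZariskiOpen.inter {U V : Set (Zm m →* ℂˣ)} (hU : IsZariskiOpen m U)
    (hV : IsZariskiOpen m V) : IsZariskiOpen m (U ∩ V) := by
  obtain ⟨S, rfl⟩ := hU
  obtain ⟨T, rfl⟩ := hV
  refine ⟨Set.image2 (· * ·) S T, Set.ext fun ρ => ⟨?_, ?_⟩⟩
  · rintro ⟨⟨f, hf, hρf⟩, g, hg, hρg⟩
    exact ⟨f * g, Set.mem_image2_of_mem hf hg, by simpa [map_mul] using ⟨hρf, hρg⟩⟩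
  · rintro ⟨_, ⟨f, hf, g, hg, rfl⟩, hρ⟩
    rw [map_mul] at hρ
    exact ⟨⟨f, hf, left_ne_zero_of_mul hρ⟩, g, hg, right_ne_zero_of_mul hρ⟩

lemma Set.Finite.isZariskiOpen_compl {B : Set (Zm m →* ℂˣ)} (hB : B.Finite) :
    IsZariskiOpen m Bᶜ := by
  induction B, hB using Set.Finite.induction_on with
  | empty => simpa using isZariskiOpen_univ
  | @insert σ B _ _ ih =>
    rw [← Set.singleton_union, Set.compl_union]
    exact (isZariskiOpen_compl_singleton σ).inter ih

end Zariski

lemma infinite_units_of_infinite (G₀ : Type*) [GroupWithZero G₀] [Infinite G₀] : Infinite G₀ˣ :=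
  have : Infinite {a : G₀ // a ≠ 0} := (Set.finite_singleton (0 : G₀)).infinite_compl.to_subtype
  Infinite.of_injective _ unitsEquivNeZero.symm.injective

lemma infinite_monoidHom_zm {m : ℕ} (hm : 1 ≤ m) : Infinite (Zm m →* ℂˣ) := by
  have := infinite_units_of_infinite ℂ
  let i : Fin m := ⟨0, hm⟩
  refine Infinite.of_injective (fun t : ℂˣ => (zpowersHom ℂˣ t).comp
    (AddMonoidHom.toMultiplicative (Pi.evalAddMonoidHom (fun _ : Fin m => ℤ) i))) fun s t hst => ?_
  simpa using DFunLike.congr_fun hst (Multiplicative.ofAdd (Pi.single i 1))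

/-- Let `Λ = ℂ[ℤ^m]` with `m ≥ 1`, and `A` a `Λ`-module which is finite
dimensional over `ℂ`.  For each `j ≥ 0`, the set
`A_j = { ρ ∈ Hom(ℤ^m, ℂ*) : Tor_j^Λ(ℂ_ρ, A) = 0 }` is a nonempty Zariski open subset of
the character torus. -/
theorem tor_vanishing_zariski_open_nonempty (m : ℕ) (hm : 1 ≤ m)
    (A : Type) [AddCommGroup A] [Module (Laurent m) A]
    (hfin : Module.Finite ℂ (RestrictScalars ℂ (Laurent m) A)) (j : ℕ) :
    IsZariskiOpen m
        {ρ : Zm m →* ℂˣ |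
          Subsingleton (((Tor (ModuleCat (Laurent m)) j).obj (CRho (Zm m) ρ)).obj
            (ModuleCat.of (Laurent m) A))} ∧
      {ρ : Zm m →* ℂˣ |
          Subsingleton (((Tor (ModuleCat (Laurent m)) j).obj (CRho (Zm m) ρ)).obj
            (ModuleCat.of (Laurent m) A))}.Nonempty := by
  set bad := {ρ : Zm m →* ℂˣ |
    Subsingleton (((Tor (ModuleCat (Laurent m)) j).obj (CRho (Zm m) ρ)).obj
      (ModuleCat.of (Laurent m) A))}ᶜ with hbad
  have hbad_finite : bad.Finite := by
    refine (finite_setOf_annihilator_le_ker_evalChar A hfin).subset fun ρ hρ f hf => ?_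
    by_contra hρf
    exact hρ (subsingleton_Tor_of_isIso_smul_of_mem_annihilator f (isIso_smul_id_CRho ρ hρf) hf j)
  have := infinite_monoidHom_zm hm
  rw [← compl_compl {ρ | _}, ← hbad]
  exact ⟨hbad_finite.isZariskiOpen_compl, hbad_finite.infinite_compl.nonempty⟩
end

section
/- With h : X = C_1 × ⋯ × C_r → E as above (r ≥ 2), defined by h(x) = Σ f_j(x_j) where each f_j : C_j → E is a branched double cover classified by a character φ_j killing no boundary loop (φ_j(α_b) = 1 for all branch points b), the smooth fibers of h are connected; hence h is an irrational (elliptic) pencil. -/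
open scoped Manifold
open Set Filter Topology Function

/-!
Split off the first factor: the fiber `{p | Σ f_j(p_j) = t}` is the fiber product of
`f_0 : C_0 → E` with `g(y) = t - Σ_{j ≥ 1} f_j(y_j)` on the connected space `Y = ∏_{j ≥ 1} C_j`.
The projection of this fiber product to `Y` is surjective, closed (`C_0` is compact) and open:
away from the branch locus `f_0` is a local homeomorphism, and over a branch point the fiber
is a single point, where a closed surjection is automatically open. Hence every nonempty
clopen set of the fiber product surjects onto `Y`. Since `r ≥ 2`, `g` takes a value in the
branch locus, whose one-point fiber cannot lie in two disjoint clopen sets.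
-/

theorem ConnectedSpace.of_isOpenMap_of_isClosedMap {X Y : Type*} [TopologicalSpace X]
    [TopologicalSpace Y] [ConnectedSpace Y] {π : X → Y} (hsurj : Surjective π)
    (hopen : IsOpenMap π) (hclosed : IsClosedMap π) {y : Y}
    (hy : (π ⁻¹' {y}).Subsingleton) : ConnectedSpace X := by
  refine connectedSpace_iff_clopen.2 ⟨hsurj.nonempty, fun U hU => ?_⟩
  have himage : ∀ V : Set X, IsClopen V → π '' V = ∅ ∨ π '' V = univ := fun V hV =>
    isClopen_iff.1 ⟨hclosed V hV.1, hopen V hV.2⟩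
  rcases himage U hU with hU' | hU'
  · exact Or.inl (image_eq_empty.1 hU')
  rcases himage Uᶜ hU.compl with hUc | hUc
  · exact Or.inr (compl_empty_iff.1 (image_eq_empty.1 hUc))
  obtain ⟨a, ha, rfl⟩ : y ∈ π '' U := hU' ▸ mem_univ y
  obtain ⟨b, hb, hba⟩ : π a ∈ π '' Uᶜ := hUc ▸ mem_univ _
  exact absurd (hy hba rfl ▸ ha) hb

theorem IsClosedMap.nhds_le_map_nhds_of_preimage_subset_singleton {X Y : Type*}
    [TopologicalSpace X] [TopologicalSpace Y] {π : X → Y} (hπ : IsClosedMap π)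
    (hsurj : Surjective π) {x : X} (hx : π ⁻¹' {π x} ⊆ {x}) : 𝓝 (π x) ≤ map π (𝓝 x) := by
  intro W hW
  obtain ⟨O, hOW, hO, hxO⟩ := mem_nhds_iff.1 (mem_map.1 hW)
  refine mem_of_superset ((hπ Oᶜ hO.isClosed_compl).isOpen_compl.mem_nhds ?_) ?_
  · rintro ⟨z, hz, hzx⟩
    exact hz (hx hzx ▸ hxO)
  · intro y hy
    obtain ⟨z, rfl⟩ := hsurj y
    by_contra hzW
    exact hy ⟨z, fun hzO => hzW (hOW hzO), rfl⟩

namespace Function.Pullback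

variable {X Y Z : Type*} {f : X → Z} {g : Y → Z}

theorem snd_surjective (hf : Surjective f) : Surjective (snd : f.Pullback g → Y) := fun y =>
  let ⟨x, hx⟩ := hf (g y)
  ⟨⟨(x, y), hx⟩, rfl⟩

theorem subsingleton_snd_preimage {y : Y} (hy : (f ⁻¹' {g y}).Subsingleton) :
    (snd ⁻¹' {y} : Set (f.Pullback g)).Subsingleton := by
  rintro ⟨⟨x, y₁⟩, h₁⟩ rfl ⟨⟨x', y₂⟩, h₂⟩ (rfl : y₂ = y₁)
  obtain rfl : x = x' := hy h₁ h₂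
  rfl

variable [TopologicalSpace X] [TopologicalSpace Y] [TopologicalSpace Z]

theorem isClosedMap_snd [CompactSpace X] [T2Space Z] (hf : Continuous f) (hg : Continuous g) :
    IsClosedMap (snd : f.Pullback g → Y) :=
  isClosedMap_snd_of_compactSpace.comp
    (isClosed_eq (hf.comp continuous_fst) (hg.comp continuous_snd)).isClosedMap_subtype_val

theorem nhds_snd_le_map_nhds (p : f.Pullback g) (hg : ContinuousAt g p.snd)
    (hf : 𝓝 (f p.fst) ≤ map f (𝓝 p.fst)) : 𝓝 p.snd ≤ map snd (𝓝 p) := by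
  intro W hW
  obtain ⟨s, hs, hsW⟩ := (nhds_subtype _ p ▸ mem_map.1 hW : _ ∈ comap Subtype.val _)
  obtain ⟨U, hU, V, hV, hUV⟩ := mem_nhds_prod_iff.1 hs
  have hfU : f '' U ∈ 𝓝 (g p.snd) := p.2 ▸ hf (image_mem_map hU)
  filter_upwards [hV, hg hfU] with y hyV ⟨x, hxU, hxy⟩
  exact hsW (show (⟨(x, y), hxy⟩ : f.Pullback g).val ∈ s from hUV ⟨hxU, hyV⟩)

theorem connectedSpace_of_isLocalHomeomorphOn [CompactSpace X] [T2Space Z] [ConnectedSpace Y]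
    {B : Set Z} (hf : Continuous f) (hg : Continuous g) (hsurj : Surjective f)
    (hloc : IsLocalHomeomorphOn f (f ⁻¹' Bᶜ)) (hB : ∀ b ∈ B, (f ⁻¹' {b}).Subsingleton)
    (hgB : ∃ y, g y ∈ B) : ConnectedSpace (f.Pullback g) := by
  obtain ⟨y, hy⟩ := hgB
  have hclosed := isClosedMap_snd (g := g) hf hg
  refine .of_isOpenMap_of_isClosedMap (snd_surjective hsurj)
    (.of_nhds_le fun p => ?_) hclosed (subsingleton_snd_preimage (hB _ hy))
  by_cases hp : f p.fst ∈ B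
  · refine hclosed.nhds_le_map_nhds_of_preimage_subset_singleton (snd_surjective hsurj)
      fun q hq => subsingleton_snd_preimage ?_ hq rfl
    exact hB _ (p.2 ▸ hp)
  · exact p.nhds_snd_le_map_nhds hg.continuousAt (hloc.map_nhds_eq hp).ge

end Function.Pullback

/-- The graph of negation is closed, and projecting along a compact factor is a closed map. -/
theorem continuous_neg_of_compactSpace {G : Type*} [AddGroup G] [TopologicalSpace G]
    [CompactSpace G] [T1Space G] [ContinuousAdd G] : Continuous fun z : G => -z := by
  refine continuous_iff_isClosed.2 fun F hF => ?_
  have hgraph : (fun z : G => -z) ⁻¹' F = Prod.fst '' {q : G × G | q.1 + q.2 = 0 ∧ q.2 ∈ F} := by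
    ext z
    constructor
    · intro hz
      exact ⟨(z, -z), ⟨add_neg_cancel z, hz⟩, rfl⟩
    · rintro ⟨⟨z, u⟩, ⟨hzu, hu⟩, rfl⟩
      show -z ∈ F
      rwa [neg_eq_of_add_eq_zero_right hzu]
  rw [hgraph]
  exact isClosedMap_fst_of_compactSpace _
    ((isClosed_singleton.preimage continuous_add).inter (hF.preimage continuous_snd))

theorem surjective_sum_of_surjective_zero {n : ℕ} {C : Fin (n + 1) → Type*}
    [∀ j, Nonempty (C j)] {E : Type*} [AddCommGroup E] (f : ∀ j, C j → E)
    (hf : Surjective (f 0)) : Surjective fun y : ∀ j, C j => ∑ j, f j (y j) := by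
  intro e
  let z : ∀ j : Fin n, C j.succ := fun _ => Classical.arbitrary _
  obtain ⟨c, hc⟩ := hf (e - ∑ j, f j.succ (z j))
  refine ⟨Fin.cons c z, ?_⟩
  simp only [Fin.sum_univ_succ, Fin.cons_zero, Fin.cons_succ, hc, sub_add_cancel]

theorem setOf_sum_eq_eq_range_finCons {n : ℕ} {C : Fin (n + 1) → Type*} {E : Type*}
    [AddCommGroup E] (f : ∀ j, C j → E) (t : E) :
    {p : ∀ j, C j | ∑ j, f j (p j) = t} =
      range fun q : (f 0).Pullback (fun y : ∀ j : Fin n, C j.succ => t - ∑ j, f j.succ (y j)) =>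
        Fin.cons q.fst q.snd := by
  ext p
  simp only [mem_ofPred_eq, mem_range, Fin.sum_univ_succ (f := fun j => f j (p j))]
  constructor
  · intro hp
    exact ⟨⟨(p 0, Fin.tail p), eq_sub_of_add_eq hp⟩, Fin.cons_self_tail p⟩
  · rintro ⟨q, rfl⟩
    simp only [Fin.cons_zero, Fin.cons_succ]
    exact (congrArg (· + _) q.2).trans (sub_add_cancel t _)

theorem sum_of_double_covers_connected_fibers_general (r : ℕ) (hr : 2 ≤ r)
    -- `E` is an elliptic curve: a compact connected complex curve, covered by `ℂ`,
    -- with a holomorphic group law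
    (E : Type) [AddCommGroup E] [TopologicalSpace E] [ChartedSpace ℂ E]
    [CompactSpace E]
    (hadd : MDifferentiable (𝓘(ℂ, ℂ).prod 𝓘(ℂ, ℂ)) 𝓘(ℂ, ℂ)
      (fun q : E × E => q.1 + q.2))
    -- the `C j` are compact connected complex curves, and `f j : C j → E` is holomorphic
    (C : Fin r → Type) [∀ j, TopologicalSpace (C j)] [∀ j, ChartedSpace ℂ (C j)]
    [∀ j, CompactSpace (C j)] [∀ j, ConnectedSpace (C j)]
    (f : ∀ j, C j → E) (hf : ∀ j, MDifferentiable 𝓘(ℂ, ℂ) 𝓘(ℂ, ℂ) (f j))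
    -- `B j ⊆ E` is the finite branch locus of the double cover `f j`
    (B : Fin r → Set E) (hB : ∀ j, (B j).Finite ∧ (B j).Nonempty)
    (hsurj : ∀ j, Function.Surjective (f j))
    -- away from the branch locus, `f j` is a two sheeted covering
    (hcov : ∀ j, IsCoveringMapOn (f j) (B j)ᶜ)
    -- `f j` is branched at every point of `B j`: each branch point has a unique preimage
    (hbranch : ∀ j, ∀ b ∈ B j, ∃! c : C j, f j c = b) :
    -- every smooth fiber of `h = Σ f_j` (fiber over a regular value) is connected
    ∀ t : E, (∀ p : ∀ j, C j, (∑ j, f j (p j)) = t → ∃ j, f j (p j) ∉ B j) →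
      IsConnected {p : ∀ j, C j | (∑ j, f j (p j)) = t} := by
  obtain ⟨k, rfl⟩ := Nat.exists_eq_add_of_le' hr
  intro t _
  have : T1Space E := ChartedSpace.t1Space ℂ E
  have : ContinuousAdd E := ⟨hadd.continuous⟩
  have : IsTopologicalAddGroup E := { continuous_neg := continuous_neg_of_compactSpace }
  let g : (∀ j : Fin (k + 1), C j.succ) → E := fun y => t - ∑ j, f j.succ (y j)
  have hg : Continuous g := continuous_const.sub <|
    continuous_finsetSum _ fun j _ => (hf j.succ).continuous.comp (continuous_apply j)
  have hgB : ∃ y, g y ∈ B 0 := by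
    obtain ⟨b, hb⟩ := (hB 0).2
    obtain ⟨y, hy⟩ := surjective_sum_of_surjective_zero (fun j => f j.succ) (hsurj 1) (t - b)
    exact ⟨y, by simpa only [g, hy, sub_sub_cancel] using hb⟩
  have := Function.Pullback.connectedSpace_of_isLocalHomeomorphOn (hf 0).continuous hg (hsurj 0)
    (hcov 0).isLocalHomeomorphOn (fun b hb _ h₁ _ h₂ => (hbranch 0 b hb).unique h₁ h₂) hgB
  rw [setOf_sum_eq_eq_range_finCons]
  exact isConnected_range <| (continuous_fst.comp continuous_subtype_val).finCons
    (continuous_snd.comp continuous_subtype_val)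

/-- With `h : X = C_1 × ⋯ × C_r → E` (`r ≥ 2`) defined by
`h(x) = Σ f_j(x_j)`, where each `f_j : C_j → E` is a branched double cover of the
elliptic curve `E`, branched over the finite set `B_j`, which is branched at *every*
point of `B_j` (each `b ∈ B_j` has exactly one preimage — this encodes that the
classifying character `φ_j` satisfies `φ_j(α_b) = 1` for every branch point `b`), the
smooth fibers of `h` are connected; hence `h` is an irrational (elliptic) pencil. -/
theorem sum_of_double_covers_connected_fibers (r : ℕ) (hr : 2 ≤ r)
    -- `E` is an elliptic curve: a compact connected complex curve, covered by `ℂ`,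
    -- with a holomorphic group law
    (E : Type) [AddCommGroup E] [TopologicalSpace E] [ChartedSpace ℂ E]
    [IsManifold 𝓘(ℂ, ℂ) (⊤ : ℕ∞) E] [CompactSpace E] [ConnectedSpace E]
    (hell : ∃ p : ℂ → E, IsCoveringMap p)
    (hadd : MDifferentiable (𝓘(ℂ, ℂ).prod 𝓘(ℂ, ℂ)) 𝓘(ℂ, ℂ)
      (fun q : E × E => q.1 + q.2))
    -- the `C j` are compact connected complex curves, and `f j : C j → E` is holomorphic
    (C : Fin r → Type) [∀ j, TopologicalSpace (C j)] [∀ j, ChartedSpace ℂ (C j)]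
    [∀ j, IsManifold 𝓘(ℂ, ℂ) (⊤ : ℕ∞) (C j)]
    [∀ j, CompactSpace (C j)] [∀ j, ConnectedSpace (C j)]
    (f : ∀ j, C j → E) (hf : ∀ j, MDifferentiable 𝓘(ℂ, ℂ) 𝓘(ℂ, ℂ) (f j))
    -- `B j ⊆ E` is the finite branch locus of the double cover `f j`
    (B : Fin r → Set E) (hB : ∀ j, (B j).Finite ∧ (B j).Nonempty)
    (hsurj : ∀ j, Function.Surjective (f j))
    -- away from the branch locus, `f j` is a two sheeted covering
    (hcov : ∀ j, IsCoveringMapOn (f j) (B j)ᶜ)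
    (hdeg : ∀ j, ∀ t : E, t ∉ B j → Set.ncard (f j ⁻¹' {t}) = 2)
    -- `f j` is branched at every point of `B j`: each branch point has a unique preimage
    (hbranch : ∀ j, ∀ b ∈ B j, ∃! c : C j, f j c = b) :
    -- every smooth fiber of `h = Σ f_j` (fiber over a regular value) is connected
    ∀ t : E, (∀ p : ∀ j, C j, (∑ j, f j (p j)) = t → ∃ j, f j (p j) ∉ B j) →
      IsConnected {p : ∀ j, C j | (∑ j, f j (p j)) = t} :=
  sum_of_double_covers_connected_fibers_general r hr E hadd C f hf B hB hsurj hcov hbranch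
end
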